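/- Let C : ℝ × [0,1] → ℝⁿ be a Lipschitz homotopy of closed curves. Then the area swept out by the homotopy satisfies the bound ( ∫₀¹∫₀^{2π} ( |∂_vC|² |∂_θC|² − ⟨∂_vC, ∂_θC⟩² )^{1/2} dθ dv )² ≤ E^N(C) · ∫₀¹ len(C)(v) dv. (Note ( |V|²|W|² − ⟨V,W⟩² )^{1/2} = |π_{W⊥}V| |W|, the norm of the cross product of V and W.) -/

import Mathlib

open MeasureTheory Set Filter intervalIntegral
open scoped Topology ENNReal NNReal RealInnerProductSpace

noncomputable section

/-- The parameter domain `I = [0,2π] × [0,1]`. -/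
def QI : Set (ℝ × ℝ) := Set.Icc 0 (2 * Real.pi) ×ˢ Set.Icc (0 : ℝ) 1

/-- Lebesgue measure on `I`. -/
def μI : Measure (ℝ × ℝ) := volume.restrict QI

/-- Projection of `h` onto the orthogonal complement of `W`
(with the convention `π_N h = h` when `W = 0`). -/
def projN {n : ℕ} (W h : EuclideanSpace ℝ (Fin n)) : EuclideanSpace ℝ (Fin n) :=
  h - ⟪h, ‖W‖⁻¹ • W⟫ • (‖W‖⁻¹ • W)

lemma projN_key {n : ℕ} (W V : EuclideanSpace ℝ (Fin n)) :
    ‖projN W V‖ ^ 2 * ‖W‖ ^ 2 = ‖V‖ ^ 2 * ‖W‖ ^ 2 - ⟪V, W⟫ ^ 2 := by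
  by_cases hW : W = 0
  · simp [projN, hW]
  · have hWn : ‖W‖ ≠ 0 := norm_ne_zero_iff.2 hW
    set u : EuclideanSpace ℝ (Fin n) := ‖W‖⁻¹ • W with hu_def
    have hu : ‖u‖ = 1 := by
      rw [hu_def, norm_smul, norm_inv, norm_norm, inv_mul_cancel₀ hWn]
    have h1 : ‖projN W V‖ ^ 2 = ‖V‖ ^ 2 - ⟪V, u⟫ ^ 2 := by
      have := norm_sub_sq_real V (⟪V, u⟫ • u)
      rw [projN, ← hu_def]
      rw [this, real_inner_smul_right, norm_smul, mul_pow, hu]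
      simp [Real.norm_eq_abs, sq_abs]
      ring
    have h2 : ⟪V, u⟫ * ‖W‖ = ⟪V, W⟫ := by
      rw [hu_def, real_inner_smul_right]
      field_simp
    have h3 : ⟪V, u⟫ ^ 2 * ‖W‖ ^ 2 = ⟪V, W⟫ ^ 2 := by
      rw [← h2]; ring
    rw [h1, sub_mul, h3]

lemma sqrt_key {n : ℕ} (W V : EuclideanSpace ℝ (Fin n)) :
    Real.sqrt (‖V‖ ^ 2 * ‖W‖ ^ 2 - ⟪V, W⟫ ^ 2) = ‖projN W V‖ * ‖W‖ := by
  rw [← projN_key, ← mul_pow, Real.sqrt_sq (by positivity)]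

lemma projN_norm_le {n : ℕ} (W V : EuclideanSpace ℝ (Fin n)) :
    ‖projN W V‖ ≤ 2 * ‖V‖ := by
  have hu : ‖(‖W‖⁻¹ • W : EuclideanSpace ℝ (Fin n))‖ ≤ 1 := by
    rw [norm_smul, norm_inv, norm_norm]
    rcases eq_or_ne ‖W‖ 0 with h | h
    · simp [h]
    · rw [inv_mul_cancel₀ h]
  calc ‖projN W V‖ ≤ ‖V‖ + ‖⟪V, ‖W‖⁻¹ • W⟫ • (‖W‖⁻¹ • W)‖ := norm_sub_le _ _
    _ ≤ ‖V‖ + ‖V‖ := by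
        gcongr
        rw [norm_smul]
        calc ‖⟪V, ‖W‖⁻¹ • W⟫‖ * ‖(‖W‖⁻¹ • W : EuclideanSpace ℝ (Fin n))‖
            ≤ (‖V‖ * ‖(‖W‖⁻¹ • W : EuclideanSpace ℝ (Fin n))‖) * 1 := by
              gcongr
              exact norm_inner_le_norm _ _
          _ ≤ ‖V‖ * 1 * 1 := by gcongr
          _ = ‖V‖ := by ring
    _ = 2 * ‖V‖ := by ring

theorem stmt18 (n : ℕ) (C : ℝ × ℝ → EuclideanSpace ℝ (Fin n)) (K : ℝ≥0)
    (Dθ Dv : ℝ × ℝ → EuclideanSpace ℝ (Fin n))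
    -- `C` is a Lipschitz homotopy of closed curves …
    (hlip : LipschitzWith K C)
    (hper : ∀ θ v : ℝ, C (θ + 2 * Real.pi, v) = C (θ, v))
    -- … with a.e. partial derivatives `∂_θC = Dθ`, `∂_vC = Dv`:
    (hD : ∀ᵐ p ∂μI, HasDerivAt (fun t => C (t, p.2)) (Dθ p) p.1 ∧
      HasDerivAt (fun t => C (p.1, t)) (Dv p) p.2) :
    -- then the area swept out is bounded:
    -- `(∫∫ |∂_vC × ∂_θC| dθ dv)² ≤ E^N(C) · ∫₀¹ len(C)(v) dv`
    (∫ p in QI, Real.sqrt (‖Dv p‖ ^ 2 * ‖Dθ p‖ ^ 2 - ⟪Dv p, Dθ p⟫ ^ 2)) ^ 2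
      ≤ (∫ p in QI, ‖projN (Dθ p) (Dv p)‖ ^ 2 * ‖Dθ p‖)
          * ∫ v in (0:ℝ)..1, ∫ θ in (0:ℝ)..(2 * Real.pi), ‖Dθ (θ, v)‖ := by

  classical
  haveI hfin : IsFiniteMeasure μI := by
    constructor
    rw [μI, Measure.restrict_apply_univ, QI, MeasureTheory.Measure.volume_eq_prod, Measure.prod_prod,
      Real.volume_Icc, Real.volume_Icc]
    exact ENNReal.mul_lt_top ENNReal.ofReal_lt_top ENNReal.ofReal_lt_top
  have hCcont : Continuous C := hlip.continuous
  -- a.e. measurability of the partial derivatives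
  have h0lim : Tendsto (fun m : ℕ => ((m:ℝ)+1)⁻¹) atTop (𝓝 0) := by
    simpa [one_div] using tendsto_one_div_add_atTop_nhds_zero_nat (𝕜 := ℝ)
  have hθae : AEMeasurable Dθ μI := by
    have hcont : ∀ m : ℕ, Continuous (fun p : ℝ × ℝ =>
        (((m:ℝ)+1)⁻¹)⁻¹ • (C (p.1 + ((m:ℝ)+1)⁻¹, p.2) - C p)) := fun m =>
      by have := hCcont; fun_prop
    refine aemeasurable_of_tendsto_metrizable_ae atTop
      (fun m => (hcont m).measurable.aemeasurable) ?_
    filter_upwards [hD] with p hp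
    have hs := hasDerivAt_iff_tendsto_slope.mp hp.1
    have hseq : Tendsto (fun m : ℕ => p.1 + ((m:ℝ)+1)⁻¹) atTop (𝓝[≠] p.1) := by
      refine tendsto_nhdsWithin_of_tendsto_nhds_of_eventually_within _ ?_ ?_
      · simpa using tendsto_const_nhds.add h0lim
      · filter_upwards with m
        have hpos : (0:ℝ) < ((m:ℝ)+1)⁻¹ := by positivity
        simp only [mem_compl_iff, mem_singleton_iff]
        intro h
        nlinarith
    refine (hs.comp hseq).congr fun m => ?_
    show slope (fun t => C (t, p.2)) p.1 (p.1 + ((m:ℝ)+1)⁻¹) = _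
    rw [slope_def_module, add_sub_cancel_left]
  have hvae : AEMeasurable Dv μI := by
    have hcont : ∀ m : ℕ, Continuous (fun p : ℝ × ℝ =>
        (((m:ℝ)+1)⁻¹)⁻¹ • (C (p.1, p.2 + ((m:ℝ)+1)⁻¹) - C p)) := fun m =>
      by have := hCcont; fun_prop
    refine aemeasurable_of_tendsto_metrizable_ae atTop
      (fun m => (hcont m).measurable.aemeasurable) ?_
    filter_upwards [hD] with p hp
    have hs := hasDerivAt_iff_tendsto_slope.mp hp.2
    have hseq : Tendsto (fun m : ℕ => p.2 + ((m:ℝ)+1)⁻¹) atTop (𝓝[≠] p.2) := by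
      refine tendsto_nhdsWithin_of_tendsto_nhds_of_eventually_within _ ?_ ?_
      · simpa using tendsto_const_nhds.add h0lim
      · filter_upwards with m
        have hpos : (0:ℝ) < ((m:ℝ)+1)⁻¹ := by positivity
        simp only [mem_compl_iff, mem_singleton_iff]
        intro h
        nlinarith
    refine (hs.comp hseq).congr fun m => ?_
    show slope (fun t => C (p.1, t)) p.2 (p.2 + ((m:ℝ)+1)⁻¹) = _
    rw [slope_def_module, add_sub_cancel_left]
  -- a.e. bounds
  have hθb : ∀ᵐ p ∂μI, ‖Dθ p‖ ≤ K := by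
    filter_upwards [hD] with p hp
    have hl : LipschitzWith K (fun t => C (t, p.2)) := by
      have h := hlip.comp (LipschitzWith.prodMk_right p.2); rw [mul_one] at h; exact h
    have h := hp.1.hasFDerivAt.le_of_lipschitz hl
    simpa [ContinuousLinearMap.norm_smulRight_apply] using h
  have hvb : ∀ᵐ p ∂μI, ‖Dv p‖ ≤ K := by
    filter_upwards [hD] with p hp
    have hl : LipschitzWith K (fun t => C (p.1, t)) := by
      have h := hlip.comp (LipschitzWith.prodMk_left p.1); rw [mul_one] at h; exact h
    have h := hp.2.hasFDerivAt.le_of_lipschitz hl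
    simpa [ContinuousLinearMap.norm_smulRight_apply] using h
  set f : ℝ × ℝ → ℝ := fun p => ‖projN (Dθ p) (Dv p)‖ * Real.sqrt ‖Dθ p‖ with hf_def
  set g : ℝ × ℝ → ℝ := fun p => Real.sqrt ‖Dθ p‖ with hg_def
  have hgm : AEStronglyMeasurable g μI := by
    have : AEMeasurable g μI := (Real.continuous_sqrt.measurable.comp measurable_norm).comp_aemeasurable hθae
    exact this.aestronglyMeasurable
  have hfm : AEStronglyMeasurable f μI := by
    have hΦ : Measurable (fun q : EuclideanSpace ℝ (Fin n) × EuclideanSpace ℝ (Fin n) =>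
        ‖projN q.1 q.2‖ * Real.sqrt ‖q.1‖) := by
      unfold projN
      have h1 : Measurable (fun q : EuclideanSpace ℝ (Fin n) × EuclideanSpace ℝ (Fin n) =>
          (‖q.1‖⁻¹ • q.1 : EuclideanSpace ℝ (Fin n))) :=
        (measurable_fst.norm.inv).smul measurable_fst
      have h2 : Measurable (fun q : EuclideanSpace ℝ (Fin n) × EuclideanSpace ℝ (Fin n) =>
          (⟪q.2, ‖q.1‖⁻¹ • q.1⟫ : ℝ)) := measurable_snd.inner h1
      exact ((measurable_snd.sub (h2.smul h1)).norm).mul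
        (Real.continuous_sqrt.measurable.comp measurable_fst.norm)
    exact ((hΦ.comp_aemeasurable (hθae.prodMk hvae))).aestronglyMeasurable
  have hf_nonneg : ∀ p, 0 ≤ f p := fun p => mul_nonneg (norm_nonneg _) (Real.sqrt_nonneg _)
  have hg_nonneg : ∀ p, 0 ≤ g p := fun p => Real.sqrt_nonneg _
  have hf2 : MemLp f (ENNReal.ofReal 2) μI := by
    refine MemLp.of_bound hfm (2 * K * Real.sqrt K) ?_
    filter_upwards [hθb, hvb] with p h1 h2
    rw [Real.norm_of_nonneg (hf_nonneg p)]
    have hb1 : ‖projN (Dθ p) (Dv p)‖ ≤ 2 * K := le_trans (projN_norm_le _ _) (by linarith)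
    have hb2 : Real.sqrt ‖Dθ p‖ ≤ Real.sqrt K := Real.sqrt_le_sqrt h1
    calc f p ≤ (2 * K) * Real.sqrt K := by
          apply mul_le_mul hb1 hb2 (Real.sqrt_nonneg _) (by positivity)
      _ = 2 * K * Real.sqrt K := by ring
  have hg2 : MemLp g (ENNReal.ofReal 2) μI := by
    refine MemLp.of_bound hgm (Real.sqrt K) ?_
    filter_upwards [hθb] with p h1
    rw [Real.norm_of_nonneg (hg_nonneg p)]
    exact Real.sqrt_le_sqrt h1
  have hpq : Real.HolderConjugate 2 2 := Real.holderConjugate_iff.mpr ⟨one_lt_two, by norm_num⟩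
  have hCS := integral_mul_le_Lp_mul_Lq_of_nonneg hpq
    (Filter.Eventually.of_forall hf_nonneg) (Filter.Eventually.of_forall hg_nonneg) hf2 hg2
  -- rewrite the three integrals
  have hLHS : (∫ p in QI, Real.sqrt (‖Dv p‖ ^ 2 * ‖Dθ p‖ ^ 2 - ⟪Dv p, Dθ p⟫ ^ 2))
      = ∫ a, f a * g a ∂μI := by
    rw [show μI = volume.restrict QI from rfl]
    refine integral_congr_ae (Filter.Eventually.of_forall fun p => ?_)
    show Real.sqrt (‖Dv p‖ ^ 2 * ‖Dθ p‖ ^ 2 - ⟪Dv p, Dθ p⟫ ^ 2) = f p * g p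
    rw [sqrt_key (Dθ p) (Dv p), hf_def, hg_def]
    dsimp only
    rw [mul_assoc, Real.mul_self_sqrt (norm_nonneg _)]
  have hF2 : (∫ a, f a ^ (2:ℝ) ∂μI) = ∫ p in QI, ‖projN (Dθ p) (Dv p)‖ ^ 2 * ‖Dθ p‖ := by
    rw [show μI = volume.restrict QI from rfl]
    refine integral_congr_ae (Filter.Eventually.of_forall fun p => ?_)
    show f p ^ (2:ℝ) = ‖projN (Dθ p) (Dv p)‖ ^ 2 * ‖Dθ p‖
    rw [Real.rpow_two, hf_def]
    dsimp only
    rw [mul_pow, Real.sq_sqrt (norm_nonneg _)]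
  have hG2 : (∫ a, g a ^ (2:ℝ) ∂μI) = ∫ p in QI, ‖Dθ p‖ := by
    rw [show μI = volume.restrict QI from rfl]
    refine integral_congr_ae (Filter.Eventually.of_forall fun p => ?_)
    show g p ^ (2:ℝ) = ‖Dθ p‖
    rw [Real.rpow_two, hg_def]
    dsimp only
    rw [Real.sq_sqrt (norm_nonneg _)]
  -- Fubini for the length integral
  have hFub : (∫ p in QI, ‖Dθ p‖)
      = ∫ v in (0:ℝ)..1, ∫ θ in (0:ℝ)..(2 * Real.pi), ‖Dθ (θ, v)‖ := by
    have hInt : Integrable (fun p => ‖Dθ p‖) μI := by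
      refine Integrable.mono' (integrable_const (K:ℝ)) hθae.norm.aestronglyMeasurable ?_
      filter_upwards [hθb] with p h
      simpa using h
    have hμ : μI = (volume.restrict (Icc (0:ℝ) (2*Real.pi))).prod (volume.restrict (Icc (0:ℝ) 1)) := by
      rw [μI, QI, Measure.prod_restrict, ← MeasureTheory.Measure.volume_eq_prod]
    have inner_eq : ∀ v : ℝ, (∫ θ in (0:ℝ)..(2*Real.pi), ‖Dθ (θ, v)‖)
        = ∫ x in Icc (0:ℝ) (2*Real.pi), ‖Dθ (x, v)‖ := fun v => by
      rw [intervalIntegral.integral_of_le Real.two_pi_pos.le,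
        ← MeasureTheory.integral_Icc_eq_integral_Ioc]
    rw [show (volume.restrict QI) = μI from rfl, hμ,
      MeasureTheory.integral_prod_symm _ (by rw [← hμ]; exact hInt)]
    simp only [inner_eq]
    rw [intervalIntegral.integral_of_le (zero_le_one : (0:ℝ) ≤ 1),
      ← MeasureTheory.integral_Icc_eq_integral_Ioc]
  -- nonnegativity of the integrals
  have hA : 0 ≤ ∫ a, f a ^ (2:ℝ) ∂μI :=
    integral_nonneg fun a => Real.rpow_nonneg (hf_nonneg a) _
  have hB : 0 ≤ ∫ a, g a ^ (2:ℝ) ∂μI :=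
    integral_nonneg fun a => Real.rpow_nonneg (hg_nonneg a) _
  have hfg_nonneg : 0 ≤ ∫ a, f a * g a ∂μI :=
    integral_nonneg fun a => mul_nonneg (hf_nonneg a) (hg_nonneg a)
  have hsq : (∫ a, f a * g a ∂μI) ^ 2
      ≤ (∫ a, f a ^ (2:ℝ) ∂μI) * (∫ a, g a ^ (2:ℝ) ∂μI) := by
    calc (∫ a, f a * g a ∂μI) ^ 2
        ≤ ((∫ a, f a ^ (2:ℝ) ∂μI) ^ ((1:ℝ)/2) * (∫ a, g a ^ (2:ℝ) ∂μI) ^ ((1:ℝ)/2)) ^ 2 :=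
          pow_le_pow_left₀ hfg_nonneg hCS 2
      _ = (∫ a, f a ^ (2:ℝ) ∂μI) * (∫ a, g a ^ (2:ℝ) ∂μI) := by
          rw [mul_pow, ← Real.rpow_natCast (_ ^ ((1:ℝ)/2)) 2, ← Real.rpow_natCast (_ ^ ((1:ℝ)/2)) 2,
            ← Real.rpow_mul hA, ← Real.rpow_mul hB]
          norm_num
  calc (∫ p in QI, Real.sqrt (‖Dv p‖ ^ 2 * ‖Dθ p‖ ^ 2 - ⟪Dv p, Dθ p⟫ ^ 2)) ^ 2
      = (∫ a, f a * g a ∂μI) ^ 2 := by rw [hLHS]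
    _ ≤ (∫ a, f a ^ (2:ℝ) ∂μI) * (∫ a, g a ^ (2:ℝ) ∂μI) := hsq
    _ = (∫ p in QI, ‖projN (Dθ p) (Dv p)‖ ^ 2 * ‖Dθ p‖)
          * ∫ v in (0:ℝ)..1, ∫ θ in (0:ℝ)..(2 * Real.pi), ‖Dθ (θ, v)‖ := by
        rw [hF2, hG2, hFub]
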